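/- Let P = ({E_k : k ∈ K}, {M_0, M_1}) be a concurrent quantum program on ℂ^d, let F = ∑_{k∈K} F_k, and let ρ be a positive semidefinite d×d matrix. Then for every finite string f ∈ K*, supp(F_f(ρ)) ⊆ supp(∑_{i=0}^{d−1} F^i(ρ)). -/

import Mathlib

/-! For positive semidefinite `A`, `B`, `σ` we have `supp (A + B) = supp A ⊔ supp B` and
`supp (M σ Mᴴ) = M (supp σ)` (write each as `Xᴴ X`). So the support of `F_k σ` or of `F σ` depends
only on `supp σ`, through the monotone map `T W = ⨆ k i, E_{k,i} M₁ W`, and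
`supp (F_f ρ) ≤ T^|f| (supp ρ)`. The supports of the partial sums `∑_{i<j} F^i ρ` are the iterates
from `⊥` of `W ↦ supp ρ ⊔ T W`; the `(j+1)`-st contains `T^j (supp ρ)`. This increasing chain of
subspaces of `ℂ^d` is constant from its first repetition on, which occurs within `d` steps. -/

open Matrix
open scoped ComplexOrder

/-- The support of a matrix `ρ`, i.e. the range (column space) of `ρ`. -/
noncomputable def matSupp {d : ℕ} (ρ : Matrix (Fin d) (Fin d) ℂ) :
    Submodule ℂ (Fin d → ℂ) :=
  LinearMap.range ρ.mulVecLin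

/-- The super-operator `F_k(ρ) = E_k(M₁ ρ M₁ᴴ)` of process `k`, where the
super-operator `E_k` has Kraus operators `E k i`. -/
noncomputable def progF {d m n : ℕ} (E : Fin m → Fin n → Matrix (Fin d) (Fin d) ℂ)
    (M₁ : Matrix (Fin d) (Fin d) ℂ) (k : Fin m)
    (ρ : Matrix (Fin d) (Fin d) ℂ) : Matrix (Fin d) (Fin d) ℂ :=
  ∑ i, E k i * (M₁ * ρ * M₁ᴴ) * (E k i)ᴴ

/-- For a finite string `f = s₁s₂⋯sₙ`, the super-operator
`F_f = F_{sₙ} ∘ ⋯ ∘ F_{s₂} ∘ F_{s₁}` (the identity for the empty string). -/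
noncomputable def progFStr {d m n : ℕ} (E : Fin m → Fin n → Matrix (Fin d) (Fin d) ℂ)
    (M₁ : Matrix (Fin d) (Fin d) ℂ) :
    List (Fin m) → Matrix (Fin d) (Fin d) ℂ → Matrix (Fin d) (Fin d) ℂ
  | [], ρ => ρ
  | k :: f, ρ => progFStr E M₁ f (progF E M₁ k ρ)


section Iterate

variable {α : Type*}

theorem Monotone.iterate_le_of_iterate_succ_eq [Preorder α] {g : α → α} (hg : Monotone g)
    {x : α} (hx : x ≤ g x) {j : ℕ} (hj : g^[j + 1] x = g^[j] x) (n : ℕ) :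
    g^[n] x ≤ g^[j] x := by
  rcases le_total n j with hnj | hjn
  · exact hg.monotone_iterate_of_le_map hx hnj
  · obtain ⟨k, rfl⟩ := exists_add_of_le hjn
    have hfix : Function.IsFixedPt g (g^[j] x) :=
      (Function.iterate_succ_apply' g j x).symm.trans hj
    rw [add_comm, Function.iterate_add_apply, (hfix.iterate k).eq]

theorem iterate_le_iterate_sup_bot [SemilatticeSup α] [OrderBot α] {T : α → α}
    (hT : Monotone T) (u : α) (n : ℕ) :
    T^[n] u ≤ (fun w => u ⊔ T w)^[n + 1] ⊥ := by
  induction n with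
  | zero => exact le_sup_left
  | succ n ih =>
    rw [Function.iterate_succ_apply', Function.iterate_succ_apply' _ (n + 1)]
    exact le_sup_of_le_right (hT ih)

end Iterate

section FiniteDimensional

variable {K V : Type*} [DivisionRing K] [AddCommGroup V] [Module K V] [FiniteDimensional K V]

theorem Submodule.exists_le_finrank_succ_eq_of_monotone {c : ℕ → Submodule K V}
    (hc : Monotone c) : ∃ j ≤ Module.finrank K V, c (j + 1) = c j := by
  by_contra! hne
  have hgrow : ∀ j ≤ Module.finrank K V + 1, j ≤ Module.finrank K (c j) := by
    intro j
    induction j with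
    | zero => simp
    | succ j ih =>
      intro hj
      have hlt : c j < c (j + 1) := (hc j.le_succ).lt_of_ne (hne j (by omega)).symm
      exact (ih (by omega)).trans_lt (Submodule.finrank_lt_finrank_of_lt hlt)
  exact absurd ((hgrow _ le_rfl).trans (Submodule.finrank_le _)) (Nat.not_succ_le_self _)

theorem Monotone.iterate_bot_le_iterate_finrank {g : Submodule K V → Submodule K V}
    (hg : Monotone g) (n : ℕ) : g^[n] ⊥ ≤ g^[Module.finrank K V] ⊥ := by
  have hchain := hg.monotone_iterate_of_le_map bot_le
  obtain ⟨j, hj, hfix⟩ := Submodule.exists_le_finrank_succ_eq_of_monotone hchain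
  exact (hg.iterate_le_of_iterate_succ_eq bot_le hfix n).trans (hchain hj)

end FiniteDimensional

namespace Matrix

variable {m n n₁ n₂ R : Type*} [Fintype n]

theorem range_mulVecLin_fromCols [CommSemiring R] [Fintype n₁] [Fintype n₂]
    (A₁ : Matrix m n₁ R) (A₂ : Matrix m n₂ R) :
    LinearMap.range (fromCols A₁ A₂).mulVecLin
      = LinearMap.range A₁.mulVecLin ⊔ LinearMap.range A₂.mulVecLin := by
  apply le_antisymm
  · rintro _ ⟨v, rfl⟩
    rw [mulVecLin_apply, fromCols_mulVec]
    exact Submodule.add_mem_sup ⟨_, rfl⟩ ⟨_, rfl⟩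
  · refine sup_le ?_ ?_
    · rintro _ ⟨u, rfl⟩
      exact ⟨Sum.elim u 0, by simp⟩
    · rintro _ ⟨u, rfl⟩
      exact ⟨Sum.elim 0 u, by simp⟩

theorem range_mulVecLin_conjTranspose_mul_self [Fintype m] [Field R] [PartialOrder R]
    [StarRing R] [StarOrderedRing R] (N : Matrix m n R) :
    LinearMap.range (Nᴴ * N).mulVecLin = LinearMap.range Nᴴ.mulVecLin := by
  refine Submodule.eq_of_le_of_finrank_le ?_ ?_
  · rw [mulVecLin_mul]
    exact LinearMap.range_comp_le_range _ _
  · show Nᴴ.rank ≤ (Nᴴ * N).rank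
    rw [rank_conjTranspose_mul_self, rank_conjTranspose]

theorem PosSemidef.exists_eq_conjTranspose_mul_self {𝕜 : Type*} [RCLike 𝕜]
    {A : Matrix n n 𝕜} (hA : A.PosSemidef) : ∃ X : Matrix n n 𝕜, A = Xᴴ * X := by
  classical
  open scoped MatrixOrder in exact CStarAlgebra.nonneg_iff_eq_star_mul_self.mp hA.nonneg

end Matrix

section Support

variable {d : ℕ}

theorem matSupp_zero : matSupp (0 : Matrix (Fin d) (Fin d) ℂ) = ⊥ := by
  rw [matSupp, mulVecLin_zero, LinearMap.range_zero]

theorem matSupp_add {A B : Matrix (Fin d) (Fin d) ℂ} (hA : A.PosSemidef) (hB : B.PosSemidef) :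
    matSupp (A + B) = matSupp A ⊔ matSupp B := by
  obtain ⟨X, rfl⟩ := hA.exists_eq_conjTranspose_mul_self
  obtain ⟨Y, rfl⟩ := hB.exists_eq_conjTranspose_mul_self
  rw [matSupp, matSupp, matSupp, ← fromCols_mul_fromRows,
    ← conjTranspose_fromRows_eq_fromCols_conjTranspose, range_mulVecLin_conjTranspose_mul_self,
    conjTranspose_fromRows_eq_fromCols_conjTranspose, range_mulVecLin_fromCols,
    range_mulVecLin_conjTranspose_mul_self, range_mulVecLin_conjTranspose_mul_self]

theorem matSupp_sum {ι : Type*} (s : Finset ι) {A : ι → Matrix (Fin d) (Fin d) ℂ}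
    (hA : ∀ i ∈ s, (A i).PosSemidef) : matSupp (∑ i ∈ s, A i) = ⨆ i ∈ s, matSupp (A i) := by
  classical
  induction s using Finset.induction_on with
  | empty => simp [matSupp_zero]
  | insert i s hi ih =>
    have hs : ∀ j ∈ s, (A j).PosSemidef := fun j hj => hA j (Finset.mem_insert_of_mem hj)
    rw [Finset.sum_insert hi, matSupp_add (hA i (s.mem_insert_self i)) (posSemidef_sum s hs),
      ih hs, Finset.iSup_insert]

theorem matSupp_mul_mul_conjTranspose {A : Matrix (Fin d) (Fin d) ℂ} (hA : A.PosSemidef)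
    (M : Matrix (Fin d) (Fin d) ℂ) : matSupp (M * A * Mᴴ) = (matSupp A).map M.mulVecLin := by
  obtain ⟨X, rfl⟩ := hA.exists_eq_conjTranspose_mul_self
  have hfactor : M * (Xᴴ * X) * Mᴴ = (X * Mᴴ)ᴴ * (X * Mᴴ) := by
    simp only [conjTranspose_mul, conjTranspose_conjTranspose, Matrix.mul_assoc]
  rw [hfactor, matSupp, matSupp, range_mulVecLin_conjTranspose_mul_self,
    range_mulVecLin_conjTranspose_mul_self, conjTranspose_mul, conjTranspose_conjTranspose,
    mulVecLin_mul, LinearMap.range_comp]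

end Support

section Program

variable {d m n : ℕ} (E : Fin m → Fin n → Matrix (Fin d) (Fin d) ℂ)
  (M₁ : Matrix (Fin d) (Fin d) ℂ)

noncomputable def progFSum (ρ : Matrix (Fin d) (Fin d) ℂ) : Matrix (Fin d) (Fin d) ℂ :=
  ∑ k, progF E M₁ k ρ

noncomputable def progFSupp (W : Submodule ℂ (Fin d → ℂ)) : Submodule ℂ (Fin d → ℂ) :=
  ⨆ k, ⨆ i, W.map (E k i * M₁).mulVecLin

theorem progFSupp_mono : Monotone (progFSupp E M₁) := fun _ _ h =>
  iSup_mono fun _ => iSup_mono fun _ => Submodule.map_mono h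

theorem progF_eq_sum (k : Fin m) (ρ : Matrix (Fin d) (Fin d) ℂ) :
    progF E M₁ k ρ = ∑ i, (E k i * M₁) * ρ * (E k i * M₁)ᴴ := by
  simp only [progF, conjTranspose_mul, Matrix.mul_assoc]

theorem progFSum_sum {ι : Type*} (s : Finset ι) (A : ι → Matrix (Fin d) (Fin d) ℂ) :
    progFSum E M₁ (∑ i ∈ s, A i) = ∑ i ∈ s, progFSum E M₁ (A i) :=
  map_sum (AddMonoidHom.mk' (progFSum E M₁) fun X Y => by
    simp only [progFSum, progF, Matrix.mul_add, Matrix.add_mul, Finset.sum_add_distrib]) A s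

theorem sum_range_succ_progFSum_iterate (ρ : Matrix (Fin d) (Fin d) ℂ) (j : ℕ) :
    ∑ i ∈ Finset.range (j + 1), (progFSum E M₁)^[i] ρ
      = ρ + progFSum E M₁ (∑ i ∈ Finset.range j, (progFSum E M₁)^[i] ρ) := by
  rw [Finset.sum_range_succ', progFSum_sum, add_comm]
  simp only [Function.iterate_succ_apply', Function.iterate_zero_apply]

variable {E M₁} {ρ : Matrix (Fin d) (Fin d) ℂ}

theorem posSemidef_progF (hρ : ρ.PosSemidef) (k : Fin m) :
    (progF E M₁ k ρ).PosSemidef := by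
  rw [progF_eq_sum]
  exact posSemidef_sum _ fun i _ => hρ.mul_mul_conjTranspose_same _

theorem posSemidef_progFSum (hρ : ρ.PosSemidef) : (progFSum E M₁ ρ).PosSemidef :=
  posSemidef_sum _ fun k _ => posSemidef_progF hρ k

theorem posSemidef_progFSum_iterate (hρ : ρ.PosSemidef) (j : ℕ) :
    ((progFSum E M₁)^[j] ρ).PosSemidef := by
  induction j with
  | zero => exact hρ
  | succ j ih => rw [Function.iterate_succ_apply']; exact posSemidef_progFSum ih

theorem matSupp_progF (hρ : ρ.PosSemidef) (k : Fin m) :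
    matSupp (progF E M₁ k ρ) = ⨆ i, (matSupp ρ).map (E k i * M₁).mulVecLin := by
  rw [progF_eq_sum]
  simpa only [matSupp_mul_mul_conjTranspose hρ, Finset.mem_univ, iSup_pos] using
    matSupp_sum Finset.univ fun i _ => hρ.mul_mul_conjTranspose_same (E k i * M₁)

theorem matSupp_progF_le (hρ : ρ.PosSemidef) (k : Fin m) :
    matSupp (progF E M₁ k ρ) ≤ progFSupp E M₁ (matSupp ρ) :=
  (matSupp_progF hρ k).trans_le
    (le_iSup (fun k => ⨆ i, (matSupp ρ).map (E k i * M₁).mulVecLin) k)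

theorem matSupp_progFSum (hρ : ρ.PosSemidef) :
    matSupp (progFSum E M₁ ρ) = progFSupp E M₁ (matSupp ρ) := by
  rw [progFSum, progFSupp]
  simpa only [matSupp_progF hρ, Finset.mem_univ, iSup_pos] using
    matSupp_sum Finset.univ fun k _ => posSemidef_progF (E := E) (M₁ := M₁) hρ k

theorem matSupp_progFStr_le (f : List (Fin m)) (hρ : ρ.PosSemidef) :
    matSupp (progFStr E M₁ f ρ) ≤ (progFSupp E M₁)^[f.length] (matSupp ρ) := by
  induction f generalizing ρ with
  | nil => exact le_rfl
  | cons k f ih =>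
    calc matSupp (progFStr E M₁ (k :: f) ρ)
        ≤ (progFSupp E M₁)^[f.length] (matSupp (progF E M₁ k ρ)) := ih (posSemidef_progF hρ k)
      _ ≤ (progFSupp E M₁)^[f.length] (progFSupp E M₁ (matSupp ρ)) :=
        (progFSupp_mono E M₁).iterate _ (matSupp_progF_le hρ k)
      _ = (progFSupp E M₁)^[(k :: f).length] (matSupp ρ) :=
        (Function.iterate_succ_apply _ _ _).symm

theorem matSupp_sum_range_progFSum_iterate (hρ : ρ.PosSemidef) (j : ℕ) :
    matSupp (∑ i ∈ Finset.range j, (progFSum E M₁)^[i] ρ)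
      = (fun W => matSupp ρ ⊔ progFSupp E M₁ W)^[j] ⊥ := by
  induction j with
  | zero => simp [matSupp_zero]
  | succ j ih =>
    have hsum := posSemidef_sum (Finset.range j) fun i _ =>
      posSemidef_progFSum_iterate (E := E) (M₁ := M₁) hρ i
    rw [sum_range_succ_progFSum_iterate, matSupp_add hρ (posSemidef_progFSum hsum),
      matSupp_progFSum hsum, ih, Function.iterate_succ_apply']

end Program

theorem supp_FStr_le_supp_sum_pow_general {d m n : ℕ}
    (E : Fin m → Fin n → Matrix (Fin d) (Fin d) ℂ)
    (M₁ : Matrix (Fin d) (Fin d) ℂ)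
    (ρ : Matrix (Fin d) (Fin d) ℂ) (hρ : ρ.PosSemidef) :
    ∀ f : List (Fin m),
      matSupp (progFStr E M₁ f ρ)
        ≤ matSupp (∑ i ∈ Finset.range d, (fun τ => ∑ k, progF E M₁ k τ)^[i] ρ) := by
  intro f
  set g := fun W => matSupp ρ ⊔ progFSupp E M₁ W
  have hg : Monotone g := fun _ _ h => sup_le_sup_left (progFSupp_mono E M₁ h) _
  calc matSupp (progFStr E M₁ f ρ)
      ≤ (progFSupp E M₁)^[f.length] (matSupp ρ) := matSupp_progFStr_le f hρ
    _ ≤ g^[f.length + 1] ⊥ := iterate_le_iterate_sup_bot (progFSupp_mono E M₁) _ _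
    _ ≤ g^[Module.finrank ℂ (Fin d → ℂ)] ⊥ := hg.iterate_bot_le_iterate_finrank _
    _ = g^[d] ⊥ := by rw [Module.finrank_fin_fun]
    _ = matSupp (∑ i ∈ Finset.range d, (progFSum E M₁)^[i] ρ) :=
      (matSupp_sum_range_progFSum_iterate hρ d).symm

theorem supp_FStr_le_supp_sum_pow {d m n : ℕ}
    (E : Fin m → Fin n → Matrix (Fin d) (Fin d) ℂ)
    (M₀ M₁ : Matrix (Fin d) (Fin d) ℂ)
    (hE : ∀ k, ∑ i, (E k i)ᴴ * E k i = 1)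
    (hM : M₀ᴴ * M₀ + M₁ᴴ * M₁ = 1)
    (ρ : Matrix (Fin d) (Fin d) ℂ) (hρ : ρ.PosSemidef) :
    ∀ f : List (Fin m),
      matSupp (progFStr E M₁ f ρ)
        ≤ matSupp (∑ i ∈ Finset.range d, (fun τ => ∑ k, progF E M₁ k τ)^[i] ρ) :=
  supp_FStr_le_supp_sum_pow_general E M₁ ρ hρ
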